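/- arXiv:2605.09763 — 2 statements merged into one kernel-verified Lean document; each statement's English description precedes it below -/
import Mathlib

section
/- Let G act on a set X by bijections, and let Sing : G → Finset X satisfy f⁻¹(Sing(g)) △ Sing(f) ⊆ Sing(f·g) ⊆ f⁻¹(Sing(g)) ∪ Sing(f), where f·g means g ∘ f. Suppose f ∈ G, s₀ ∈ X, Sing(f) = {s₀}, and the forward orbit points sᵢ = fⁱ(s₀) are pairwise distinct for i ∈ ℤ (infinite orbit). Then for every n ≥ 1, Sing(fⁿ) = {s_{-n+1}, ..., s_{-1}, s₀}, a set of cardinality n. -/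
/-- If `Sing f = {s₀}` and the orbit of `s₀` under `f` is infinite, then
`Sing (fⁿ) = {s₋ₙ₊₁, …, s₋₁, s₀}`, a set of cardinality `n`. -/
theorem sing_pow_of_infinite_orbit {G X : Type*} [Group G] [DecidableEq X]
    (ρ : G →* Equiv.Perm X) (hρ : Function.Injective ρ)
    (Sing : G → Finset X)
    (hsub : ∀ f g : G,
      symmDiff ((Sing g).image (ρ f).symm) (Sing f) ⊆ Sing (f * g) ∧
      Sing (f * g) ⊆ (Sing g).image (ρ f).symm ∪ Sing f)
    (f : G) (s₀ : X)
    (s : ℤ → X) (hs : ∀ i : ℤ, s i = ((ρ f) ^ i) s₀)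
    (hinj : Function.Injective s)
    (hSf : Sing f = {s₀}) :
    ∀ n : ℕ, 1 ≤ n →
      Sing (f ^ n) = (Finset.Icc (-(n : ℤ) + 1) 0).image s ∧
      (Sing (f ^ n)).card = n := by
  have hs0 : s 0 = s₀ := by simpa using hs 0
  have hshift : ∀ i : ℤ, (ρ f).symm (s i) = s (i - 1) := by
    intro i
    rw [hs, hs, Equiv.symm_apply_eq]
    have : (ρ f) ^ i = (ρ f) * (ρ f) ^ (i - 1) := by
      rw [← zpow_one_add]; ring_nf
    rw [this]; rfl
  have himg : ∀ a b : ℤ,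
      ((Finset.Icc a b).image s).image (ρ f).symm
        = (Finset.Icc (a - 1) (b - 1)).image s := by
    intro a b
    rw [Finset.image_image]
    ext x
    simp only [Finset.mem_image, Function.comp_apply, Finset.mem_Icc]
    constructor
    · rintro ⟨i, hi, rfl⟩
      exact ⟨i - 1, by omega, (hshift i).symm⟩
    · rintro ⟨i, hi, rfl⟩
      exact ⟨i + 1, by omega, by rw [hshift]; ring_nf⟩
  have hcard : ∀ a b : ℤ, a ≤ b + 1 →
      ((Finset.Icc a b).image s).card = (b + 1 - a).toNat := by
    intro a b _
    rw [Finset.card_image_of_injective _ hinj, Int.card_Icc]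
  intro n hn
  induction n with
  | zero => omega
  | succ m ih =>
    rcases Nat.eq_or_lt_of_le hn with h1 | h1
    · -- m = 0
      have hm : m = 0 := by omega
      subst hm
      constructor
      · have h0 : (0:ℕ) + 1 = 1 := rfl
        rw [h0, pow_one, hSf]
        have : Finset.Icc (-((1:ℕ):ℤ) + 1) 0 = {0} := by decide
        rw [this, Finset.image_singleton, hs0]
      · simp [pow_one, hSf]
    · have hm : 1 ≤ m := by omega
      obtain ⟨hEq, hCard⟩ := ih hm
      -- preimage set
      have hpre : ((Sing (f ^ m)).image (ρ f).symm)
          = (Finset.Icc (-(m:ℤ)) (-1)).image s := by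
        rw [hEq, himg]; ring_nf
      have hdisj : Disjoint ((Sing (f ^ m)).image (ρ f).symm) (Sing f) := by
        rw [hpre, hSf, Finset.disjoint_singleton_right]
        simp only [Finset.mem_image, Finset.mem_Icc, not_exists]
        rintro i ⟨hi, hsi⟩
        have : i = 0 := hinj (by rw [hsi, hs0])
        omega
      have hEq' : Sing (f ^ (m + 1))
          = ((Sing (f ^ m)).image (ρ f).symm) ∪ Sing f := by
        have hmul : f ^ (m + 1) = f * f ^ m := by rw [pow_succ']
        apply Finset.Subset.antisymm
        · rw [hmul]; exact (hsub f (f ^ m)).2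
        · rw [hmul, ← Finset.sup_eq_union, ← hdisj.symmDiff_eq_sup]; exact (hsub f (f ^ m)).1
      have hunion : (Finset.Icc (-(m:ℤ)) (-1)).image s ∪ {s₀}
          = (Finset.Icc (-(m:ℤ) + 1 - 1) 0).image s := by
        ext x
        simp only [Finset.mem_union, Finset.mem_image, Finset.mem_Icc,
          Finset.mem_singleton]
        constructor
        · rintro (⟨i, hi, rfl⟩ | rfl)
          · exact ⟨i, by omega, rfl⟩
          · exact ⟨0, by omega, hs0⟩
        · rintro ⟨i, hi, rfl⟩
          rcases eq_or_lt_of_le hi.2 with h | h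
          · right; rw [h, hs0]
          · left; exact ⟨i, by omega, rfl⟩
      constructor
      · rw [hEq', hpre, hSf, hunion]
        congr 1
        push_cast
        ring_nf
      · rw [hEq', Finset.card_union_of_disjoint hdisj, hpre, hSf,
          hcard _ _ (by omega), Finset.card_singleton]
        omega
end

section
/- Let g be as follows: g is increasing and continuous on (p − ε, p] with g(p) = p, g(x) < x for all x ∈ (p − ε, p), and g ∘ L_p = L_p ∘ g where L_p(x) = 2(x−p)+p, on a suitable domain; furthermore assume g is piecewise linear with finitely many slopes appearing, so that λ := min over x ∈ (p−ε, p) of (p − g(x))/(p − x) exists and is attained. Then λ > 1, g(x) ≤ p − λ(p − x) for all x ∈ (p − ε, p], and for each k ≥ 1 there is a neighborhood (p − δ_k, p] on which g^k(x) ≤ p − λ^k(p − x). -/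
/-- Key estimate for a singularity at a fixed point: if `g` is increasing, continuous,
fixes `p`, satisfies `g < id` on `(p−ε, p)`, is self-similar under the dilation
`L_p(x) = 2(x−p)+p`, and the minimal secant slope `λ` is attained at some `x₀`, then
`λ > 1`, the graph of `g` lies below the line of slope `λ` through `(p,p)`, and for
each `k ≥ 1` the `k`-th iterate lies below the line of slope `λ^k` on some
neighborhood `(p − δ, p]`. -/
theorem singularity_fixed_point_estimate (g : ℝ → ℝ) (p ε : ℝ) (hε : 0 < ε)
    (hfix : g p = p)
    (hcont : ContinuousOn g (Set.Ioc (p - ε) p))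
    (hmono : StrictMonoOn g (Set.Ioc (p - ε) p))
    (hlt : ∀ x ∈ Set.Ioo (p - ε) p, g x < x)
    (hss : ∀ x, x ∈ Set.Ioc (p - ε) p → 2 * (x - p) + p ∈ Set.Ioc (p - ε) p →
      g (2 * (x - p) + p) = 2 * (g x - p) + p)
    (x₀ : ℝ) (hx₀ : x₀ ∈ Set.Ioo (p - ε) p)
    (hmin : ∀ x ∈ Set.Ioo (p - ε) p, (p - g x₀) / (p - x₀) ≤ (p - g x) / (p - x)) :
    (1 < (p - g x₀) / (p - x₀)) ∧
    (∀ x ∈ Set.Ioc (p - ε) p, g x ≤ p - (p - g x₀) / (p - x₀) * (p - x)) ∧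
    (∀ k : ℕ, 1 ≤ k → ∃ δ > 0, ∀ x ∈ Set.Ioc (p - δ) p,
      g^[k] x ≤ p - ((p - g x₀) / (p - x₀)) ^ k * (p - x)) := by
  set l : ℝ := (p - g x₀) / (p - x₀) with hl
  have hx0p : 0 < p - x₀ := by linarith [hx₀.2]
  have hg0 : g x₀ < x₀ := hlt x₀ hx₀
  have hlam : 1 < l := by
    rw [hl, lt_div_iff₀ hx0p]
    linarith
  have part2 : ∀ x ∈ Set.Ioc (p - ε) p, g x ≤ p - l * (p - x) := by
    intro x hx
    rcases eq_or_lt_of_le hx.2 with h | h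
    · rw [h, hfix]; simp
    · have hxo : x ∈ Set.Ioo (p - ε) p := ⟨hx.1, h⟩
      have := hmin x hxo
      have hxp : 0 < p - x := by linarith
      rw [hl, div_le_div_iff₀ hx0p hxp] at this
      have : l * (p - x) ≤ p - g x := by
        rw [hl, div_mul_eq_mul_div, div_le_iff₀ hx0p]; linarith
      linarith
  refine ⟨hlam, part2, ?_⟩
  have key : ∀ k : ℕ, ∃ δ > 0, ∀ x ∈ Set.Ioc (p - δ) p,
      g^[k] x ≤ p - l ^ k * (p - x) := by
    intro k
    induction k with
    | zero => exact ⟨ε, hε, fun x _ => by simp⟩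
    | succ k ih =>
      obtain ⟨δ, hδ, hk⟩ := ih
      have hpmem : p ∈ Set.Ioc (p - ε) p := ⟨by linarith, le_refl p⟩
      have hc : ContinuousWithinAt g (Set.Ioc (p - ε) p) p := hcont p hpmem
      obtain ⟨δ', hδ', hδ'c⟩ := Metric.continuousWithinAt_iff.mp hc δ hδ
      refine ⟨min δ' ε, lt_min hδ' hε, fun x hx => ?_⟩
      have hxε : x ∈ Set.Ioc (p - ε) p :=
        ⟨lt_of_le_of_lt (by linarith [min_le_right δ' ε]) hx.1, hx.2⟩
      have hgxle : g x ≤ p := by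
        rcases eq_or_lt_of_le hx.2 with h | h
        · rw [h, hfix]
        · exact le_of_lt (lt_trans (hlt x ⟨hxε.1, h⟩) h)
      have hdist : dist x p < δ' := by
        rw [Real.dist_eq, abs_of_nonpos (by linarith [hx.2])]
        have := hx.1
        have : p - min δ' ε < x := this
        have hm : min δ' ε ≤ δ' := min_le_left _ _
        linarith
      have hgx : g x ∈ Set.Ioc (p - δ) p := by
        have := hδ'c hxε hdist
        rw [hfix, Real.dist_eq] at this
        constructor
        · cases abs_lt.mp this with
          | intro h1 h2 => linarith
        · exact hgxle
      have h1 : g^[k] (g x) ≤ p - l ^ k * (p - g x) := hk _ hgx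
      have h2 : g x ≤ p - l * (p - x) := part2 x hxε
      have hlk : (0:ℝ) < l ^ k := pow_pos (by linarith) k
      have h3 : l ^ k * (l * (p - x)) ≤ l ^ k * (p - g x) := by
        apply mul_le_mul_of_nonneg_left (by linarith) (le_of_lt hlk)
      rw [Function.iterate_succ_apply]
      calc g^[k] (g x) ≤ p - l ^ k * (p - g x) := h1
        _ ≤ p - l ^ (k + 1) * (p - x) := by rw [pow_succ]; nlinarith [hlk]
  exact fun k _ => key k
end
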